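/- arXiv:2401.00327 — 8 statements merged into one kernel-verified Lean document; each statement's English description precedes it below -/
import Mathlib

section
/- Let X be a G-flow. A generic point of X exists if and only if there is a unique minimal subflow X₀ ⊆ X; in this case X₀ consists precisely of the generic points of X. -/
open Pointwise

/-- A subflow of a `G`-flow: a closed, `G`-invariant subset. -/
def IsSubflow (G : Type*) [Group G] {X : Type*} [TopologicalSpace X] [MulAction G X]
    (S : Set X) : Prop :=
  IsClosed S ∧ ∀ g : G, ∀ x ∈ S, g • x ∈ S

/-- A minimal subflow: a nonempty subflow with no nonempty proper subflow. -/
def IsMinimalSubflow (G : Type*) [Group G] {X : Type*} [TopologicalSpace X] [MulAction G X]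
    (S : Set X) : Prop :=
  S.Nonempty ∧ IsSubflow G S ∧ ∀ T ⊆ S, T.Nonempty → IsSubflow G T → T = S

/-- A subset `U` of the flow is generic if finitely many `G`-translates of `U` cover `X`. -/
def IsGenericSet (G : Type*) [Group G] {X : Type*} [MulAction G X] (U : Set X) : Prop :=
  ∃ s : Finset G, (Set.univ : Set X) ⊆ ⋃ g ∈ s, g • U

/-- A point is generic if each of its open neighbourhoods is a generic set. -/
def IsGenericPt (G : Type*) [Group G] {X : Type*} [TopologicalSpace X] [MulAction G X]
    (p : X) : Prop :=
  ∀ U : Set X, IsOpen U → p ∈ U → IsGenericSet G U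

/-!
Every nonempty subflow contains a minimal one (Zorn's lemma and compactness). For an open set `U`,
the points whose orbit misses `U` form a subflow, so `U` is generic exactly when it meets every
minimal subflow. Applied to the complement of a minimal subflow `M`, this shows that a point is
generic exactly when it lies in every minimal subflow. Distinct minimal subflows are disjoint, so a
generic point exists iff there is exactly one minimal subflow, which is then the set of generic
points.
-/

section Subflow

variable {G X : Type*} [Group G] [TopologicalSpace X] [MulAction G X]

lemma isSubflow_univ : IsSubflow G (Set.univ : Set X) :=
  ⟨isClosed_univ, fun _ _ _ => Set.mem_univ _⟩

lemma IsSubflow.inter {S T : Set X} (hS : IsSubflow G S) (hT : IsSubflow G T) :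
    IsSubflow G (S ∩ T) :=
  ⟨hS.1.inter hT.1, fun g _ hx => ⟨hS.2 g _ hx.1, hT.2 g _ hx.2⟩⟩

lemma isSubflow_sInter {c : Set (Set X)} (hc : ∀ T ∈ c, IsSubflow G T) :
    IsSubflow G (⋂₀ c) :=
  ⟨isClosed_sInter fun T hT => (hc T hT).1, fun g _ hx T hT => (hc T hT).2 g _ (hx T hT)⟩

lemma isSubflow_compl_iUnion_smul [ContinuousConstSMul G X] {U : Set X} (hU : IsOpen U) :
    IsSubflow G (⋃ g : G, g • U)ᶜ := by
  refine ⟨(isOpen_iUnion fun g => hU.smul g).isClosed_compl, fun h x hx hhx => hx ?_⟩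
  obtain ⟨g, hg⟩ := Set.mem_iUnion.mp hhx
  refine Set.mem_iUnion.mpr ⟨h⁻¹ * g, Set.mem_smul_set_iff_inv_smul_mem.mpr ?_⟩
  simpa [mul_smul] using Set.mem_smul_set_iff_inv_smul_mem.mp hg

lemma IsSubflow.exists_isMinimalSubflow_subset [CompactSpace X] {S : Set X}
    (hS : IsSubflow G S) (hne : S.Nonempty) : ∃ M ⊆ S, IsMinimalSubflow G M := by
  obtain ⟨M, hMS, hmin⟩ := zorn_superset_nonempty {T : Set X | T ⊆ S ∧ T.Nonempty ∧ IsSubflow G T}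
    (fun c hcF hchain hcne => by
      have : Nonempty c := hcne.to_subtype
      refine ⟨⋂₀ c, ⟨?_, ?_, isSubflow_sInter fun T hT => (hcF hT).2.2⟩,
        fun T hT => Set.sInter_subset_of_mem hT⟩
      · obtain ⟨T, hT⟩ := hcne
        exact (Set.sInter_subset_of_mem hT).trans (hcF hT).1
      · exact IsCompact.nonempty_sInter_of_directed_nonempty_isCompact_isClosed
          (IsChain.directedOn (r := fun s t : Set X => s ⊇ t) hchain.symm) (fun T hT => (hcF hT).2.1)
          (fun T hT => (hcF hT).2.2.1.isCompact) (fun T hT => (hcF hT).2.2.1))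
    S ⟨subset_rfl, hne, hS⟩
  obtain ⟨-, hMne, hMsub⟩ := hmin.prop
  exact ⟨M, hMS, hMne, hMsub, fun T hTM hTne hTsub =>
    hmin.eq_of_subset ⟨hTM.trans hMS, hTne, hTsub⟩ hTM⟩

lemma IsMinimalSubflow.eq_of_inter_nonempty {M N : Set X} (hM : IsMinimalSubflow G M)
    (hN : IsMinimalSubflow G N) (hne : (M ∩ N).Nonempty) : M = N :=
  have hsub := hM.2.1.inter hN.2.1
  (hM.2.2 _ Set.inter_subset_left hne hsub).symm.trans (hN.2.2 _ Set.inter_subset_right hne hsub)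

end Subflow

section Generic

variable {G X : Type*} [Group G] [TopologicalSpace X] [CompactSpace X] [MulAction G X]
  [ContinuousConstSMul G X]

lemma IsOpen.isGenericSet_iff_forall_inter_nonempty {U : Set X} (hU : IsOpen U) :
    IsGenericSet G U ↔ ∀ M : Set X, IsMinimalSubflow G M → (M ∩ U).Nonempty := by
  constructor
  · rintro ⟨s, hs⟩ M ⟨⟨x, hx⟩, hMsub, -⟩
    obtain ⟨g, -, hxg⟩ := Set.mem_iUnion₂.mp (hs (Set.mem_univ x))
    exact ⟨g⁻¹ • x, hMsub.2 g⁻¹ x hx, Set.mem_smul_set_iff_inv_smul_mem.mp hxg⟩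
  · intro hmeets
    have hcover : (⋃ g : G, g • U) = Set.univ := by
      by_contra hne
      obtain ⟨M, hMY, hM⟩ := (isSubflow_compl_iUnion_smul hU).exists_isMinimalSubflow_subset
        (Set.nonempty_compl.mpr hne)
      obtain ⟨y, hyM, hyU⟩ := hmeets M hM
      exact hMY hyM (Set.mem_iUnion.mpr ⟨1, by simpa using hyU⟩)
    exact isCompact_univ.elim_finite_subcover _ (fun g => hU.smul g) hcover.ge

lemma isGenericPt_iff_forall_mem {p : X} :
    IsGenericPt G p ↔ ∀ M : Set X, IsMinimalSubflow G M → p ∈ M := by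
  constructor
  · intro hp M hM
    by_contra hpM
    have hMc := hM.2.1.1.isOpen_compl
    obtain ⟨y, hyM, hyMc⟩ := (hMc.isGenericSet_iff_forall_inter_nonempty.mp (hp _ hMc hpM)) M hM
    exact hyMc hyM
  · exact fun h U hU hpU =>
      hU.isGenericSet_iff_forall_inter_nonempty.mpr fun M hM => ⟨p, h M hM, hpU⟩

lemma setOf_isGenericPt_eq_sInter :
    {p : X | IsGenericPt G p} = ⋂₀ {M : Set X | IsMinimalSubflow G M} := by
  ext p
  simp only [Set.mem_ofPred_eq, Set.mem_sInter, isGenericPt_iff_forall_mem]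

end Generic

theorem stmt2_general {G X : Type*} [Group G] [TopologicalSpace X] [CompactSpace X]
    [MulAction G X] (hX : ∀ g : G, Continuous fun x : X => g • x) :
    ((∃ p : X, IsGenericPt G p) ↔ (∃! S : Set X, IsMinimalSubflow G S)) ∧
      (∀ S : Set X, IsMinimalSubflow G S → (∃! T : Set X, IsMinimalSubflow G T) →
        S = {p : X | IsGenericPt G p}) := by
  have : ContinuousConstSMul G X := ⟨hX⟩
  refine ⟨⟨fun ⟨p, hp⟩ => ?_, fun huniq => ?_⟩, fun S hS huniq => ?_⟩
  · have hp := isGenericPt_iff_forall_mem.mp hp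
    obtain ⟨M, -, hM⟩ := (isSubflow_univ (G := G)).exists_isMinimalSubflow_subset
      ⟨p, Set.mem_univ p⟩
    exact ⟨M, hM, fun N hN => hN.eq_of_inter_nonempty hM ⟨p, hp N hN, hp M hM⟩⟩
  · obtain ⟨S, hS, hS_uniq⟩ := huniq
    obtain ⟨p, hp⟩ := hS.1
    exact ⟨p, isGenericPt_iff_forall_mem.mpr fun M hM => hS_uniq M hM ▸ hp⟩
  · have hminimal : {M : Set X | IsMinimalSubflow G M} = {S} :=
      Set.eq_singleton_iff_unique_mem.mpr ⟨hS, fun M hM => huniq.unique hM hS⟩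
    rw [setOf_isGenericPt_eq_sInter, hminimal, Set.sInter_singleton]

theorem stmt2 {G X : Type*} [Group G] [TopologicalSpace X] [CompactSpace X] [T2Space X]
    [MulAction G X] (hX : ∀ g : G, Continuous fun x : X => g • x) :
    ((∃ p : X, IsGenericPt G p) ↔ (∃! S : Set X, IsMinimalSubflow G S)) ∧
      (∀ S : Set X, IsMinimalSubflow G S → (∃! T : Set X, IsMinimalSubflow G T) →
        S = {p : X | IsGenericPt G p}) :=
  stmt2_general hX
end

section
/- Let G be a group and A ⊆ G. Then A is strongly generic (every nonempty element of the G-algebra of subsets of G generated by A under complement, finite union, and left translation is generic) if and only if for every finite U ⊆ G the set Per_U(χ_A) = {t ∈ G : ∀u ∈ U, (ut ∈ A ↔ u ∈ A)} is generic in G. -/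
open Pointwise

variable {G : Type*} [Group G]

/-- A subset `S ⊆ G` is generic if finitely many left translates of `S` cover `G`. -/
def Generic (S : Set G) : Prop :=
  ∃ s : Finset G, (Set.univ : Set G) ⊆ ⋃ g ∈ s, g • S

/-- The `G`-algebra of subsets of `G` generated by `A`: the closure of `{A}` under
complement, finite union and left translation. -/
inductive GAlg (A : Set G) : Set G → Prop
  | base : GAlg A A
  | compl {B : Set G} : GAlg A B → GAlg A Bᶜ
  | union {B C : Set G} : GAlg A B → GAlg A C → GAlg A (B ∪ C)
  | smul (g : G) {B : Set G} : GAlg A B → GAlg A (g • B)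

/-- `A` is strongly generic if every nonempty set in the `G`-algebra generated by `A`
is generic. -/
def StronglyGeneric (A : Set G) : Prop :=
  ∀ B : Set G, GAlg A B → B.Nonempty → Generic B

lemma generic_of_smul_subset {P B : Set G} (t₀ : G) (hPB : t₀ • P ⊆ B)
    (hP : Generic P) : Generic B := by
  classical
  obtain ⟨s, hs⟩ := hP
  refine ⟨s.image (fun h => h * t₀⁻¹), fun x _ => ?_⟩
  obtain ⟨h, hh, hx⟩ := Set.mem_iUnion₂.mp (hs (Set.mem_univ x))
  refine Set.mem_iUnion₂.mpr ⟨h * t₀⁻¹, Finset.mem_image_of_mem _ hh, ?_⟩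
  rw [Set.mem_smul_set_iff_inv_smul_mem]
  apply hPB
  rw [Set.mem_smul_set_iff_inv_smul_mem]
  have hx' := Set.mem_smul_set_iff_inv_smul_mem.mp hx
  simpa [smul_eq_mul, mul_assoc] using hx'

lemma galg_pattern {A B : Set G} (hB : GAlg A B) :
    ∃ U : Finset G, ∀ t t' : G, (∀ g ∈ U, (g⁻¹ * t ∈ A ↔ g⁻¹ * t' ∈ A)) →
      (t ∈ B ↔ t' ∈ B) := by
  classical
  induction hB with
  | base => exact ⟨{1}, fun t t' h => by simpa using h 1 (Finset.mem_singleton_self 1)⟩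
  | compl _ ih =>
      obtain ⟨U, hU⟩ := ih
      exact ⟨U, fun t t' h => not_congr (hU t t' h)⟩
  | union _ _ ihB ihC =>
      obtain ⟨U, hU⟩ := ihB; obtain ⟨V, hV⟩ := ihC
      exact ⟨U ∪ V, fun t t' h =>
        or_congr (hU t t' fun g hg => h g (Finset.mem_union_left _ hg))
          (hV t t' fun g hg => h g (Finset.mem_union_right _ hg))⟩
  | smul g _ ih =>
      obtain ⟨U, hU⟩ := ih
      refine ⟨U.image (g * ·), fun t t' h => ?_⟩
      rw [Set.mem_smul_set_iff_inv_smul_mem, Set.mem_smul_set_iff_inv_smul_mem]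
      apply hU
      intro k hk
      have := h (g * k) (Finset.mem_image_of_mem _ hk)
      simpa [smul_eq_mul, mul_assoc] using this

lemma GAlg.inter {A B C : Set G} (hB : GAlg A B) (hC : GAlg A C) :
    GAlg A (B ∩ C) := by
  have := (hB.compl.union hC.compl).compl
  simpa [Set.compl_union] using this

lemma galg_per (A : Set G) (U : Finset G) :
    GAlg A {t : G | ∀ u ∈ U, (u * t ∈ A ↔ u ∈ A)} := by
  classical
  induction U using Finset.induction with
  | empty =>
      have h : {t : G | ∀ u ∈ (∅ : Finset G), (u * t ∈ A ↔ u ∈ A)} = A ∪ Aᶜ := by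
        ext t; simp [Set.mem_union, em]
      rw [h]
      exact GAlg.base.union GAlg.base.compl
  | @insert a U' ha ih =>
      have hsplit : {t : G | ∀ u ∈ insert a U', (u * t ∈ A ↔ u ∈ A)} =
          {t : G | a * t ∈ A ↔ a ∈ A} ∩ {t : G | ∀ u ∈ U', (u * t ∈ A ↔ u ∈ A)} := by
        ext t
        simp only [Set.mem_setOf_eq, Set.mem_inter_iff, Finset.mem_insert]
        constructor
        · intro h; exact ⟨h a (Or.inl rfl), fun u hu => h u (Or.inr hu)⟩
        · rintro ⟨h1, h2⟩ u (rfl | hu)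
          · exact h1
          · exact h2 u hu
      rw [hsplit]
      refine GAlg.inter ?_ ih
      have hsm : a⁻¹ • A = {t : G | a * t ∈ A} := by
        ext t
        rw [Set.mem_smul_set_iff_inv_smul_mem]
        simp [smul_eq_mul]
      by_cases haA : a ∈ A
      · have : {t : G | a * t ∈ A ↔ a ∈ A} = a⁻¹ • A := by
          rw [hsm]; ext t; simp [haA]
        rw [this]; exact GAlg.smul a⁻¹ GAlg.base
      · have : {t : G | a * t ∈ A ↔ a ∈ A} = (a⁻¹ • A)ᶜ := by
          rw [hsm]; ext t; simp [haA]
        rw [this]; exact (GAlg.smul a⁻¹ GAlg.base).compl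

theorem stmt8 (A : Set G) :
    StronglyGeneric A ↔
      ∀ U : Finset G, Generic {t : G | ∀ u ∈ U, (u * t ∈ A ↔ u ∈ A)} := by
  constructor
  · intro hSG U
    exact hSG _ (galg_per A U) ⟨1, fun u _ => by simp⟩
  · rintro hPer B hB ⟨t₀, ht₀⟩
    obtain ⟨U, hU⟩ := galg_pattern hB
    classical
    refine generic_of_smul_subset t₀ ?_ (hPer (U.image (fun g => g⁻¹ * t₀)))
    rintro x ⟨s, hs, rfl⟩
    have hx : (t₀ * s ∈ B) := by
      refine (hU t₀ (t₀ * s) fun g hg => ?_).mp ht₀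
      have := hs (g⁻¹ * t₀) (Finset.mem_image_of_mem _ hg)
      rw [mul_assoc] at this
      exact this.symm
    simpa [smul_eq_mul] using hx
end

section
/- Let G be a group and A ⊆ G strongly generic. If the Boolean algebra generated by the left translates of A contains an atom whose left translates are finite in number covering G, then this algebra is finite; consequently, if A is strongly generic and the G-algebra generated by A contains an atom, then A is periodic. -/
open Pointwise

variable {G : Type*} [Group G]

/-- `B` is an atom of the algebra generated by `A`. -/
def IsAtomOf (A B : Set G) : Prop :=
  GAlg A B ∧ B.Nonempty ∧ ∀ C : Set G, GAlg A C → C ⊆ B → C = ∅ ∨ C = B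

/-- The set of periods of `A`. -/
def PerSet (A : Set G) : Set G := {t : G | ∀ x : G, x * t ∈ A ↔ x ∈ A}

/-- `A` is periodic if `Per(χ_A)` is a finite index subgroup of `G`. -/
def IsPeriodic (A : Set G) : Prop :=
  ∃ H : Subgroup G, (H : Set G) = PerSet A ∧ H.FiniteIndex

lemma IsAtomOf.smul {A B : Set G} (g : G) (h : IsAtomOf A B) : IsAtomOf A (g • B) := by
  obtain ⟨h1, h2, h3⟩ := h
  refine ⟨GAlg.smul g h1, h2.smul_set, ?_⟩
  intro C hC hsub
  have hsub' : g⁻¹ • C ⊆ B := by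
    have := Set.smul_set_mono (a := g⁻¹) hsub
    rwa [inv_smul_smul] at this
  rcases h3 _ (GAlg.smul g⁻¹ hC) hsub' with h | h
  · left
    have : g • (g⁻¹ • C) = g • (∅ : Set G) := by rw [h]
    simpa [smul_inv_smul] using this
  · right
    have : g • (g⁻¹ • C) = g • B := by rw [h]
    simpa [smul_inv_smul] using this

lemma atom_cases {A B C : Set G} (hC : GAlg A C) (hB : IsAtomOf A B) :
    C ∩ B = ∅ ∨ B ⊆ C := by
  rcases hB.2.2 _ (hC.inter hB.1) Set.inter_subset_right with h | h
  · exact Or.inl h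
  · exact Or.inr (by rw [← h]; exact Set.inter_subset_left)

theorem stmt9 :
    (∀ A B : Set G, IsAtomOf A B →
        (∃ s : Finset G, (Set.univ : Set G) ⊆ ⋃ g ∈ s, g • B) →
        {C : Set G | GAlg A C}.Finite) ∧
      (∀ A : Set G, StronglyGeneric A → (∃ B : Set G, IsAtomOf A B) → IsPeriodic A) := by
  constructor
  · rintro A B hB ⟨s, hs⟩
    have hfin : ((fun T : Set G => ⋃ g ∈ T, g • B) '' 𝒫 (s : Set G)).Finite :=
      (s.finite_toSet.powerset).image _
    refine hfin.subset ?_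
    intro C hC
    refine ⟨{g ∈ (s : Set G) | g • B ⊆ C}, fun g hg => hg.1, ?_⟩
    apply Set.Subset.antisymm
    · intro x hx
      obtain ⟨g, hg, hxg⟩ := Set.mem_iUnion₂.1 hx
      exact hg.2 hxg
    · intro x hx
      obtain ⟨g, hg, hxg⟩ := Set.mem_iUnion₂.1 (hs (Set.mem_univ x))
      rcases atom_cases hC (hB.smul g) with h | h
      · exact absurd (Set.mem_inter hx hxg) (by simp [h])
      · exact Set.mem_iUnion₂.2 ⟨g, ⟨hg, h⟩, hxg⟩
  · rintro A hSG ⟨B, hB⟩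
    obtain ⟨s, hs⟩ := hSG B hB.1 hB.2.1
    obtain ⟨g₀, -, h1⟩ := Set.mem_iUnion₂.1 (hs (Set.mem_univ 1))
    have hPatom : IsAtomOf A (g₀ • B) := hB.smul g₀
    have key : g₀ • B ⊆ PerSet A := by
      intro t ht x
      have hx : x ∈ x • (g₀ • B) := by
        simpa using Set.smul_mem_smul_set (a := x) h1
      have hxt : x * t ∈ x • (g₀ • B) := Set.smul_mem_smul_set ht
      rcases atom_cases GAlg.base (hPatom.smul x) with h | h
      · constructor
        · intro hxa
          exact absurd (Set.mem_inter hxa hxt) (by simp [h])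
        · intro hxa
          exact absurd (Set.mem_inter hxa hx) (by simp [h])
      · exact ⟨fun _ => h hx, fun _ => h hxt⟩
    refine ⟨{ carrier := PerSet A
              one_mem' := by intro x; simp
              mul_mem' := by
                intro a b ha hb x
                rw [← mul_assoc]
                exact (hb _).trans (ha x)
              inv_mem' := by
                intro a ha x
                have := ha (x * a⁻¹)
                simpa [mul_assoc] using this.symm }, rfl, ?_⟩
    set H : Subgroup G := { carrier := PerSet A, one_mem' := _, mul_mem' := _, inv_mem' := _ }
    have : Finite (G ⧸ H) := by
      refine Finite.of_surjective
        (fun g : s => (QuotientGroup.mk ((g : G) * g₀⁻¹) : G ⧸ H)) ?_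
      intro q
      induction q using QuotientGroup.induction_on with
      | H x =>
        obtain ⟨g, hg, hxg⟩ := Set.mem_iUnion₂.1 (hs (Set.mem_univ x))
        refine ⟨⟨g, hg⟩, ?_⟩
        refine (QuotientGroup.eq).2 ?_
        have hmem : (g * g₀⁻¹)⁻¹ * x ∈ g₀ • B := by
          obtain ⟨b, hb, rfl⟩ := hxg
          refine ⟨b, hb, ?_⟩
          simp [mul_assoc, smul_eq_mul]
        exact key hmem
    exact H.finiteIndex_of_finite_quotient
end

section
/- Let G be a group with its profinite topology. Every subset of G that is clopen in the profinite topology is strongly generic. -/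
open Pointwise

variable {G : Type*} [Group G]

/-- The profinite topology on `G`, generated by the cosets of finite index subgroups. -/
def profiniteTopology (G : Type*) [Group G] : TopologicalSpace G :=
  TopologicalSpace.generateFrom
    {S : Set G | ∃ (H : Subgroup G) (g : G), H.FiniteIndex ∧ S = g • (H : Set G)}


/-! A nonempty profinitely open set contains a coset of a finite index subgroup, and such a coset
is generic. Since left translations are homeomorphisms of the profinite topology, the profinitely
clopen sets form a `G`-algebra, so every set in the `G`-algebra generated by a clopen set is
clopen, and hence generic as soon as it is nonempty. -/

namespace Generic

theorem mono {S T : Set G} (hS : Generic S) (hST : S ⊆ T) : Generic T := by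
  obtain ⟨s, hs⟩ := hS
  exact ⟨s, hs.trans <| Set.iUnion₂_mono fun g _ => Set.smul_set_mono hST⟩

theorem smul {S : Set G} (hS : Generic S) (x : G) : Generic (x • S) := by
  classical
  obtain ⟨s, hs⟩ := hS
  refine ⟨s.image (· * x⁻¹), fun z hz => ?_⟩
  obtain ⟨g, hg, hzg⟩ := Set.mem_iUnion₂.1 (hs hz)
  refine Set.mem_iUnion₂.2 ⟨g * x⁻¹, Finset.mem_image_of_mem _ hg, ?_⟩
  rwa [smul_smul, inv_mul_cancel_right]

end Generic

theorem Subgroup.generic_of_finiteIndex (H : Subgroup G) [H.FiniteIndex] :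
    Generic (H : Set G) := by
  have : Finite (G ⧸ H) := H.finite_quotient_of_finiteIndex
  refine ⟨(Set.finite_range fun q : G ⧸ H => q.out).toFinset, fun z _ => ?_⟩
  obtain ⟨h, hh⟩ := QuotientGroup.mk_out_eq_mul H z
  refine Set.mem_iUnion₂.2 ⟨(z : G ⧸ H).out, by simp, ?_⟩
  rw [hh, Set.mem_smul_set_iff_inv_smul_mem, smul_eq_mul, mul_inv_rev, inv_mul_cancel_right]
  exact H.inv_mem h.2

theorem IsClopen.smul {α Γ : Type*} [TopologicalSpace α] [Group Γ] [MulAction Γ α]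
    [ContinuousConstSMul Γ α] {s : Set α} (hs : IsClopen s) (c : Γ) : IsClopen (c • s) :=
  ⟨hs.1.smul c, hs.2.smul c⟩

theorem GAlg.isClopen [TopologicalSpace G] [ContinuousConstSMul G G] {A B : Set G}
    (hA : IsClopen A) (hB : GAlg A B) : IsClopen B := by
  induction hB with
  | base => exact hA
  | compl _ ih => exact ih.compl
  | union _ _ ih₁ ih₂ => exact ih₁.union ih₂
  | smul g _ ih => exact IsClopen.smul ih g

namespace ProfiniteTopology

attribute [local instance] profiniteTopology

instance continuousConstSMul : ContinuousConstSMul G G where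
  continuous_const_smul c := continuous_generateFrom_iff.2 <| by
    rintro _ ⟨H, g, hH, rfl⟩
    rw [Set.preimage_smul, smul_smul]
    exact TopologicalSpace.GenerateOpen.basic _ ⟨H, c⁻¹ * g, hH, rfl⟩

theorem exists_finiteIndex_smul_subset_of_isOpen {S : Set G} (hS : IsOpen S) {x : G}
    (hx : x ∈ S) : ∃ H : Subgroup G, H.FiniteIndex ∧ x • (H : Set G) ⊆ S := by
  induction hS generalizing x with
  | basic s hs =>
    obtain ⟨H, g, hH, rfl⟩ := hs
    obtain ⟨h, hh, rfl⟩ := hx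
    refine ⟨H, hH, ?_⟩
    rw [smul_assoc, smul_coe_set hh]
  | univ => exact ⟨⊤, inferInstance, Set.subset_univ _⟩
  | inter s t _ _ ihs iht =>
    obtain ⟨H, hH, hHs⟩ := ihs hx.1
    obtain ⟨K, hK, hKt⟩ := iht hx.2
    refine ⟨H ⊓ K, inferInstance, Set.subset_inter ?_ ?_⟩
    · exact (Set.smul_set_mono inf_le_left).trans hHs
    · exact (Set.smul_set_mono inf_le_right).trans hKt
  | sUnion S _ ih =>
    obtain ⟨s, hs, hxs⟩ := hx
    obtain ⟨H, hH, hsub⟩ := ih s hs hxs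
    exact ⟨H, hH, hsub.trans (Set.subset_sUnion_of_mem hs)⟩

theorem generic_of_isOpen {S : Set G} (hS : IsOpen S) (hne : S.Nonempty) : Generic S := by
  obtain ⟨x, hx⟩ := hne
  obtain ⟨H, hH, hsub⟩ := exists_finiteIndex_smul_subset_of_isOpen hS hx
  exact (H.generic_of_finiteIndex.smul x).mono hsub

end ProfiniteTopology

theorem stmt11 (A : Set G) (hA : @IsClopen G (profiniteTopology G) A) :
    StronglyGeneric A :=
  letI := profiniteTopology G
  fun _ hB hne => ProfiniteTopology.generic_of_isOpen (hB.isClopen hA).isOpen hne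
end

section
/- Let G = ℤ with addition, let v₂ : ℤ → ℕ ∪ {∞} be the 2-adic valuation, and let A = {k ∈ ℤ : k ≠ 0 and v₂(k) is odd}. Then A is strongly generic: for every finite U ⊆ ℤ, the set Per_U(χ_A) = {t : ∀u ∈ U, (u + t ∈ A ↔ u ∈ A)} contains a coset 2^N + 2^{N+1}ℤ for suitable even N, and hence is generic. -/
/-- The set `A = {k ∈ ℤ : k ≠ 0 and v₂(k) is odd}`. -/
def A13 : Set ℤ := {k : ℤ | k ≠ 0 ∧ padicValInt 2 k % 2 = 1}

/-- A subset `S ⊆ ℤ` is generic if finitely many translates of `S` cover `ℤ`. -/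
def GenericZ (S : Set ℤ) : Prop :=
  ∃ s : Finset ℤ, (Set.univ : Set ℤ) ⊆ ⋃ g ∈ s, (fun t => g + t) '' S

lemma padicValInt_neg (p : ℕ) (a : ℤ) : padicValInt p (-a) = padicValInt p a := by
  simp [padicValInt]

lemma padicValInt_add_eq_of_lt {a b : ℤ} (ha : a ≠ 0) (hb : b ≠ 0) (hab : a + b ≠ 0)
    (h : padicValInt 2 a < padicValInt 2 b) :
    padicValInt 2 (a + b) = padicValInt 2 a := by
  have hq : (a : ℚ) ≠ 0 := Int.cast_ne_zero.mpr ha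
  have hr : (b : ℚ) ≠ 0 := Int.cast_ne_zero.mpr hb
  have hqr : (a : ℚ) + b ≠ 0 := by
    rw [← Int.cast_add]; exact Int.cast_ne_zero.mpr hab
  have hval : padicValRat 2 (a : ℚ) < padicValRat 2 (b : ℚ) := by
    rw [padicValRat.of_int, padicValRat.of_int]; exact_mod_cast h
  have := padicValRat.add_eq_of_lt (p := 2) hqr hq hr hval
  rw [← Int.cast_add, padicValRat.of_int, padicValRat.of_int] at this
  exact_mod_cast this

lemma padicValInt_coset (N : ℕ) (m : ℤ) :
    padicValInt 2 (2 ^ N + 2 ^ (N + 1) * m) = N := by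
  have h : (2 : ℤ) ^ N + 2 ^ (N + 1) * m = 2 ^ N * (1 + 2 * m) := by ring
  have hodd : ¬ (2 : ℤ) ∣ (1 + 2 * m) := by omega
  have h1 : (1 + 2 * m : ℤ) ≠ 0 := by omega
  rw [h, padicValInt.mul (by positivity) h1, padicValInt.eq_zero_of_not_dvd (z := 1 + 2 * m) (by exact_mod_cast hodd)]
  have : padicValInt 2 ((2 : ℤ) ^ N) = padicValInt 2 ((2 ^ N : ℕ) : ℤ) := by norm_num
  rw [this, padicValInt.of_nat, padicValNat.prime_pow]
  ring

lemma coset_ne_zero (N : ℕ) (m : ℤ) : (2 : ℤ) ^ N + 2 ^ (N + 1) * m ≠ 0 := by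
  intro h
  have h2 : (2 : ℤ) ^ N * (1 + 2 * m) = 0 := by linear_combination h
  have := pow_ne_zero N (two_ne_zero (α := ℤ))
  have : (1 + 2 * m : ℤ) = 0 := by
    rcases mul_eq_zero.mp h2 with h | h
    · exact absurd h this
    · exact h
  omega

theorem stmt13 (U : Finset ℤ) :
    ∃ N : ℕ, Even N ∧
      (∀ m : ℤ, (2 ^ N + 2 ^ (N + 1) * m) ∈ {t : ℤ | ∀ u ∈ U, (u + t ∈ A13 ↔ u ∈ A13)}) ∧
      GenericZ {t : ℤ | ∀ u ∈ U, (u + t ∈ A13 ↔ u ∈ A13)} := by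
  classical
  obtain ⟨M, hM⟩ : ∃ M : ℕ, ∀ u ∈ U, padicValInt 2 u ≤ M :=
    ⟨(U.image (padicValInt 2)).sup id, fun u hu =>
      Finset.le_sup (f := id) (Finset.mem_image_of_mem _ hu)⟩
  refine ⟨2 * (M + 1), ⟨M + 1, by ring⟩, ?_, ?_⟩
  · -- the coset lies in the periodicity set
    intro m u hu
    set N := 2 * (M + 1) with hN
    set t : ℤ := 2 ^ N + 2 ^ (N + 1) * m with ht
    have htne : t ≠ 0 := coset_ne_zero N m
    have htval : padicValInt 2 t = N := padicValInt_coset N m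
    by_cases hu0 : u = 0
    · subst hu0
      simp only [zero_add]
      constructor
      · rintro ⟨-, hodd⟩
        rw [htval] at hodd; omega
      · rintro ⟨h, -⟩; exact absurd rfl h
    · have huM : padicValInt 2 u < N := lt_of_le_of_lt (hM u hu) (by omega)
      have hut : u + t ≠ 0 := by
        intro h
        have : u = -t := by omega
        rw [this, padicValInt_neg, htval] at huM; omega
      have hval : padicValInt 2 (u + t) = padicValInt 2 u := by
        apply padicValInt_add_eq_of_lt hu0 htne hut
        rw [htval]; exact huM
      constructor
      · rintro ⟨-, hodd⟩; exact ⟨hu0, by rw [← hval]; exact hodd⟩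
      · rintro ⟨-, hodd⟩; exact ⟨hut, by rw [hval]; exact hodd⟩
  · -- genericity
    set N := 2 * (M + 1) with hN
    refine ⟨(Finset.range (2 ^ (N + 1))).image (fun n : ℕ => (n : ℤ)), ?_⟩
    intro x _
    have hpos : (0 : ℤ) < 2 ^ (N + 1) := by positivity
    set g : ℤ := (x - 2 ^ N) % 2 ^ (N + 1) with hg
    have hg0 : 0 ≤ g := Int.emod_nonneg _ (ne_of_gt hpos)
    have hglt : g < 2 ^ (N + 1) := Int.emod_lt_of_pos _ hpos
    set q : ℤ := (x - 2 ^ N) / 2 ^ (N + 1) with hq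
    have hdiv : 2 ^ (N + 1) * q + g = x - 2 ^ N := Int.mul_ediv_add_emod _ _
    have hx : x = g + (2 ^ N + 2 ^ (N + 1) * q) := by omega
    simp only [Set.mem_iUnion]
    refine ⟨g, ?_, 2 ^ N + 2 ^ (N + 1) * q, ?_, hx.symm⟩
    · simp only [Finset.mem_image, Finset.mem_range]
      refine ⟨g.toNat, ?_, Int.toNat_of_nonneg hg0⟩
      have : ((2 : ℤ) ^ (N + 1)) = ((2 ^ (N + 1) : ℕ) : ℤ) := by push_cast; ring
      omega
    · intro u hu
      -- reuse first part: this element is in the coset, prove membership directly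
      have htne : (2 : ℤ) ^ N + 2 ^ (N + 1) * q ≠ 0 := coset_ne_zero N q
      have htval : padicValInt 2 ((2 : ℤ) ^ N + 2 ^ (N + 1) * q) = N := padicValInt_coset N q
      set t : ℤ := 2 ^ N + 2 ^ (N + 1) * q with ht
      by_cases hu0 : u = 0
      · subst hu0
        simp only [zero_add]
        constructor
        · rintro ⟨-, hodd⟩
          rw [htval] at hodd; omega
        · rintro ⟨h, -⟩; exact absurd rfl h
      · have huM : padicValInt 2 u < N := lt_of_le_of_lt (hM u hu) (by omega)
        have hut : u + t ≠ 0 := by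
          intro h
          have : u = -t := by omega
          rw [this, padicValInt_neg, htval] at huM; omega
        have hval : padicValInt 2 (u + t) = padicValInt 2 u := by
          apply padicValInt_add_eq_of_lt hu0 htne hut
          rw [htval]; exact huM
        constructor
        · rintro ⟨-, hodd⟩; exact ⟨hu0, by rw [← hval]; exact hodd⟩
        · rintro ⟨-, hodd⟩; exact ⟨hut, by rw [hval]; exact hodd⟩
end

section
/- Let G be an infinite profinite group with a strictly decreasing sequence G = F₀ > F₁ > F₂ > ... of open (hence finite index) subgroups, F_∞ = ⋂ₙ Fₙ, and A = ⋃_{n≥1} (F_{2n-1} \ F_{2n}). Then Per(χ_A) = {t ∈ G : At⁻¹ = A} equals F_∞; in particular A is not periodic since F_∞ has infinite index. -/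
open Pointwise

/-!
Call `Fₖ \ Fₖ₊₁` the `k`-th layer, so `A` is the union of the odd layers. Right translation by
`t ∈ F_∞` preserves every `Fₖ`, hence `A`. Conversely, if `t ∈ Fₙ \ Fₙ₊₁`, pick `x ∈ Fₙ₊₁ \ Fₙ₊₂`:
then `x` lies in layer `n + 1` and `x t` in layer `n`, and exactly one of these layers lies in `A`,
so `A t⁻¹ ≠ A`. If `F_∞` had finite index, so would every `Fₙ ⊇ F_∞`, and the indices `[G : Fₙ]`
would increase strictly while staying bounded by `[G : F_∞]`.
-/

section Layers

variable {G : Type*} [Group G]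

/-- The set `A`; the paper's layer `F₂ₙ₋₁ \ F₂ₙ` (`n ≥ 1`) is indexed here by `n - 1`. -/
def oddLayers (F : ℕ → Subgroup G) : Set G :=
  ⋃ n : ℕ, ((F (2 * n + 1) : Set G) \ (F (2 * n + 2) : Set G))

theorem exists_mem_and_not_mem_succ {F : ℕ → Subgroup G} (htop : F 0 = ⊤) {t : G} {m : ℕ}
    (ht : t ∉ F m) : ∃ n, t ∈ F n ∧ t ∉ F (n + 1) := by
  induction m with
  | zero => exact absurd (htop ▸ Subgroup.mem_top t) ht
  | succ m ih => exact (em (t ∈ F m)).elim (fun h => ⟨m, h, ht⟩) ih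

theorem mem_oddLayers_iff_odd {F : ℕ → Subgroup G} (hF : Antitone F) {y : G} {j : ℕ}
    (hy : y ∈ F j) (hy' : y ∉ F (j + 1)) : y ∈ oddLayers F ↔ Odd j := by
  simp only [oddLayers, Set.mem_iUnion, Set.mem_sdiff, SetLike.mem_coe]
  constructor
  · rintro ⟨m, hm, hm'⟩
    have hle : 2 * m + 1 ≤ j := by
      by_contra! h
      exact hy' (hF h hm)
    have hlt : j < 2 * m + 2 := by
      by_contra! h
      exact hm' (hF h hy)
    exact ⟨m, by omega⟩
  · rintro ⟨m, rfl⟩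
    exact ⟨m, hy, hy'⟩

theorem mul_mem_oddLayers_iff_of_mem_iInf {F : ℕ → Subgroup G} {t : G} (ht : t ∈ ⨅ n, F n)
    (y : G) : y * t ∈ oddLayers F ↔ y ∈ oddLayers F := by
  rw [Subgroup.mem_iInf] at ht
  simp only [oddLayers, Set.mem_iUnion, Set.mem_sdiff, SetLike.mem_coe,
    Subgroup.mul_mem_cancel_right _ (ht _)]

theorem Set.image_mul_right_inv_eq_self_iff {s : Set G} {t : G} :
    (fun a => a * t⁻¹) '' s = s ↔ ∀ y, y * t ∈ s ↔ y ∈ s := by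
  rw [Set.image_mul_right, inv_inv, Set.ext_iff]
  rfl

theorem setOf_image_mul_right_inv_oddLayers_eq_iInf {F : ℕ → Subgroup G} (htop : F 0 = ⊤)
    (hdec : ∀ n, F (n + 1) < F n) :
    {t : G | (fun a => a * t⁻¹) '' oddLayers F = oddLayers F} = ((⨅ n, F n : Subgroup G) : Set G) := by
  have hF : Antitone F := antitone_nat_of_succ_le fun n => (hdec n).le
  ext t
  simp only [Set.mem_ofPred_eq, Set.image_mul_right_inv_eq_self_iff, SetLike.mem_coe]
  refine ⟨fun hper => ?_, mul_mem_oddLayers_iff_of_mem_iInf⟩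
  by_contra hnot
  obtain ⟨m, hm⟩ := not_forall.mp (mt Subgroup.mem_iInf.mpr hnot)
  obtain ⟨n, htn, htn'⟩ := exists_mem_and_not_mem_succ htop hm
  obtain ⟨x, hx, hx'⟩ := SetLike.exists_of_lt (hdec (n + 1))
  have hxt : x * t ∈ F n := mul_mem (hF n.le_succ hx) htn
  have hxt' : x * t ∉ F (n + 1) := by rwa [Subgroup.mul_mem_cancel_left _ hx]
  have hodd : Odd n ↔ Odd (n + 1) :=
    (mem_oddLayers_iff_odd hF hxt hxt').symm.trans
      ((hper x).trans (mem_oddLayers_iff_odd hF hx hx'))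
  rw [Nat.odd_add_one] at hodd
  tauto

end Layers

theorem Subgroup.not_finiteIndex_iInf_of_strictAnti {G : Type*} [Group G] {F : ℕ → Subgroup G}
    (hF : StrictAnti F) : ¬(⨅ n, F n).FiniteIndex := by
  intro hfin
  have hfin' : ∀ n, (F n).FiniteIndex := fun n => Subgroup.finiteIndex_of_le (iInf_le F n)
  have hmono : StrictMono fun n => (F n).index := fun m n h => Subgroup.index_strictAnti (hF h)
  set N := (⨅ n, F n).index
  have hle : (F (N + 1)).index ≤ N := Subgroup.index_antitone (iInf_le F (N + 1))
  have hge : N + 1 ≤ (F (N + 1)).index := hmono.id_le (N + 1)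
  omega

theorem stmt14_general {G : Type*} [Group G]
    (F : ℕ → Subgroup G)
    (htop : F 0 = ⊤) (hdec : ∀ n : ℕ, F (n + 1) < F n) :
    {t : G | (fun a => a * t⁻¹) ''
        (⋃ n : ℕ, ((F (2 * n + 1) : Set G) \ (F (2 * n + 2) : Set G))) =
      ⋃ n : ℕ, ((F (2 * n + 1) : Set G) \ (F (2 * n + 2) : Set G))} =
        ((⨅ n : ℕ, F n : Subgroup G) : Set G) ∧
      ¬(⨅ n : ℕ, F n).FiniteIndex :=
  ⟨setOf_image_mul_right_inv_oddLayers_eq_iInf htop hdec,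
    Subgroup.not_finiteIndex_iInf_of_strictAnti (strictAnti_nat_of_succ_lt hdec)⟩

theorem stmt14 {G : Type*} [Group G] [TopologicalSpace G] [IsTopologicalGroup G]
    [CompactSpace G] [T2Space G] [TotallyDisconnectedSpace G] [Infinite G]
    (F : ℕ → Subgroup G) (hopen : ∀ n : ℕ, IsOpen (F n : Set G))
    (htop : F 0 = ⊤) (hdec : ∀ n : ℕ, F (n + 1) < F n) :
    {t : G | (fun a => a * t⁻¹) ''
        (⋃ n : ℕ, ((F (2 * n + 1) : Set G) \ (F (2 * n + 2) : Set G))) =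
      ⋃ n : ℕ, ((F (2 * n + 1) : Set G) \ (F (2 * n + 2) : Set G))} =
        ((⨅ n : ℕ, F n : Subgroup G) : Set G) ∧
      ¬(⨅ n : ℕ, F n).FiniteIndex :=
  stmt14_general F htop hdec
end

section
/- Let G = F₂ be the free group on generators x, y, and let A = T_x be the set of elements of G whose reduced word begins with x. Then A is uniformly strongly generic: every nonempty finite intersection of left translates of A and of its complement is 2-generic. Moreover A is not periodic, since {xⁿA : n ∈ ℕ} = {T_{x^{n+1}} : n ∈ ℕ} is infinite. -/
/-!
Write `x = of 0`, `y = of 1`. Given `g` in a nonempty cell `C = ⋂ aA ∩ ⋂ b Aᶜ`, put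
`c = g yᴺ` with `N` longer than every word `h⁻¹g` (`h` ranging over the finitely many
translating elements). The reduced word of `h⁻¹g yᴺ` still starts like that of `h⁻¹g` as far
as membership in `A` is concerned, and it ends in `y`; so for every `w` not starting with `y⁻¹`
there is no cancellation in `h⁻¹g yᴺ w`, whence `c w ∈ C`. Since every `v` either does not
start with `y⁻¹` or `x v` does not, `G = c⁻¹C ∪ (c x)⁻¹C`.

For non-periodicity, `x A ⊊ A`, so the translates `xⁿA` strictly decrease.
-/

open Pointwise

/-- The set of elements of the free group on two generators whose reduced word
begins with the first generator `x`. -/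
def A15 : Set (FreeGroup (Fin 2)) :=
  {g : FreeGroup (Fin 2) | g.toWord.head? = some ((0 : Fin 2), true)}

section TranslateCell

variable {G : Type*} [Group G]

/-- An atom of the Boolean algebra generated by the left translates of `A`: every nonempty
Boolean combination of translates is a finite union of these. -/
def translateCell (A : Set G) (s t : Finset G) : Set G :=
  (⋂ a ∈ s, a • A) ∩ ⋂ b ∈ t, b • Aᶜ

theorem mem_translateCell_iff {A : Set G} {s t : Finset G} {g : G} :
    g ∈ translateCell A s t ↔ (∀ a ∈ s, a⁻¹ * g ∈ A) ∧ ∀ b ∈ t, b⁻¹ * g ∉ A := by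
  simp only [translateCell, Set.mem_inter_iff, Set.mem_iInter, Set.mem_smul_set_iff_inv_smul_mem,
    smul_eq_mul, Set.mem_compl_iff]

theorem mem_translateCell_of_forall_iff [DecidableEq G] {A : Set G} {s t : Finset G} {g g' : G}
    (hg : g ∈ translateCell A s t) (h : ∀ a ∈ s ∪ t, a⁻¹ * g' ∈ A ↔ a⁻¹ * g ∈ A) :
    g' ∈ translateCell A s t := by
  rw [mem_translateCell_iff] at hg ⊢
  exact ⟨fun a ha => (h a (Finset.mem_union_left t ha)).2 (hg.1 a ha),
    fun b hb => by rw [h b (Finset.mem_union_right s hb)]; exact hg.2 b hb⟩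

theorem univ_subset_smul_union_smul {B W : Set G} {c d : G} (hB : c • W ⊆ B)
    (hW : ∀ v, v ∈ W ∨ d * v ∈ W) : Set.univ ⊆ c⁻¹ • B ∪ (c * d)⁻¹ • B := by
  intro v _
  simp only [Set.mem_union, Set.mem_smul_set_iff_inv_smul_mem, inv_inv, smul_eq_mul]
  rcases hW v with hv | hv
  · exact .inl (hB (Set.smul_mem_smul_set hv))
  · exact .inr (by simpa [mul_assoc] using hB (Set.smul_mem_smul_set hv))

end TranslateCell

namespace FreeGroup

variable {α : Type*} [DecidableEq α]

theorem toWord_mul_eq_append {x y : FreeGroup α}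
    (h : ∀ p ∈ x.toWord.getLast?, ∀ q ∈ y.toWord.head?, p.1 = q.1 → p.2 = q.2) :
    (x * y).toWord = x.toWord ++ y.toWord := by
  rw [toWord_mul, IsReduced.reduce_eq]
  exact List.isChain_append.2 ⟨isReduced_toWord, isReduced_toWord, h⟩

theorem toWord_mul_of_of_getLast?_eq {b : α} {v : FreeGroup α}
    (hv : v.toWord.getLast? = some (b, false)) :
    (v * of b).toWord = v.toWord.dropLast := by
  have hsplit := List.dropLast_append_getLast? _ hv
  have hred : IsReduced v.toWord.dropLast :=
    (isReduced_toWord (x := v)).infix ⟨[], [(b, false)], by simpa using hsplit⟩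
  have hstep : Red.Step (v.toWord.dropLast ++ [(b, false), (b, true)]) v.toWord.dropLast := by
    simpa using Red.Step.not (L₁ := v.toWord.dropLast) (L₂ := []) (x := b) (b := false)
  rw [toWord_mul, toWord_of, ← hsplit, List.append_assoc, List.singleton_append, hsplit,
    reduce.Step.eq hstep, hred.reduce_eq]

theorem toWord_mul_of_of_getLast?_ne {b : α} {v : FreeGroup α}
    (hv : v.toWord.getLast? ≠ some (b, false)) :
    (v * of b).toWord = v.toWord ++ [(b, true)] := by
  refine toWord_mul_eq_append ?_
  rintro ⟨c, e⟩ hp q hq rfl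
  simp only [toWord_of, List.head?_cons, Option.mem_def, Option.some.injEq] at hq
  subst hq
  cases e
  · exact absurd hp hv
  · rfl

theorem head?_toWord_mul_of {b : α} {l : α × Bool} (hl : l.1 ≠ b) (v : FreeGroup α) :
    (v * of b).toWord.head? = some l ↔ v.toWord.head? = some l := by
  by_cases hv : v.toWord.getLast? = some (b, false)
  · rw [toWord_mul_of_of_getLast?_eq hv, ← List.dropLast_append_getLast? _ hv,
      List.dropLast_concat]
    rcases v.toWord.dropLast with _ | ⟨c, L⟩
    · simpa using fun h => hl (congrArg Prod.fst h).symm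
    · simp
  · rw [toWord_mul_of_of_getLast?_ne hv, List.head?_append]
    rcases v.toWord with _ | ⟨c, L⟩
    · simpa using fun h => hl (congrArg Prod.fst h).symm
    · simp

theorem head?_toWord_mul_of_pow {b : α} {l : α × Bool} (hl : l.1 ≠ b) (v : FreeGroup α)
    (n : ℕ) : (v * of b ^ n).toWord.head? = some l ↔ v.toWord.head? = some l := by
  induction n with
  | zero => rw [pow_zero, mul_one]
  | succ n ih => rw [pow_succ, ← mul_assoc, head?_toWord_mul_of hl, ih]

theorem getLast?_toWord_mul_of_pow (b : α) {v : FreeGroup α} {n : ℕ}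
    (hn : v.toWord.length < n) : (v * of b ^ n).toWord.getLast? = some (b, true) := by
  -- each factor `of b` either cancels a trailing `(b, false)` or appends `(b, true)`
  suffices ∀ n, (v * of b ^ n).toWord.getLast? = some (b, true) ∨
      (v * of b ^ n).toWord.length + n = v.toWord.length from
    (this n).resolve_right (by omega)
  intro n
  induction n with
  | zero => simp
  | succ n ih =>
    rw [pow_succ, ← mul_assoc]
    by_cases hv : (v * of b ^ n).toWord.getLast? = some (b, false)
    · rw [toWord_mul_of_of_getLast?_eq hv]
      have hlen := ih.resolve_left (by rw [hv]; simp)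
      have hpos : (v * of b ^ n).toWord ≠ [] := by rintro h; simp [h] at hv
      have := List.length_pos_iff.2 hpos
      refine .inr ?_
      rw [List.length_dropLast]
      omega
    · rw [toWord_mul_of_of_getLast?_ne hv]
      exact .inl List.getLast?_concat

theorem head?_toWord_mul_of_pow_mul {b : α} {l : α × Bool} (hl : l.1 ≠ b) {v w : FreeGroup α}
    {n : ℕ} (hn : v.toWord.length < n) (hw : w.toWord.head? ≠ some (b, false)) :
    (v * of b ^ n * w).toWord.head? = some l ↔ v.toWord.head? = some l := by
  have hlast := getLast?_toWord_mul_of_pow b hn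
  have hne : (v * of b ^ n).toWord ≠ [] := by rintro h; simp [h] at hlast
  rw [toWord_mul_eq_append, List.head?_append_of_ne_nil _ hne, head?_toWord_mul_of_pow hl]
  rintro p hp ⟨c, e⟩ hq rfl
  rw [hlast, Option.mem_some_iff] at hp
  subst hp
  cases e
  · exact absurd hq hw
  · rfl

theorem mem_startsWith_iff {l : α × Bool} {g : FreeGroup α} :
    g ∈ startsWith l ↔ g.toWord.head? = some l := by
  rw [startsWith, Set.mem_ofPred_eq, List.head?_eq_getElem?]

theorem exists_smul_compl_startsWith_subset_translateCell {l : α × Bool} {b : α} (hl : l.1 ≠ b)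
    {s t : Finset (FreeGroup α)} {g : FreeGroup α} (hg : g ∈ translateCell (startsWith l) s t) :
    ∃ c : FreeGroup α, c • (startsWith (b, false))ᶜ ⊆ translateCell (startsWith l) s t := by
  set N := (s ∪ t).sup (fun h => (h⁻¹ * g).toWord.length) + 1
  refine ⟨g * of b ^ N, Set.smul_set_subset_iff.2 fun w hw => ?_⟩
  refine mem_translateCell_of_forall_iff hg fun h hh => ?_
  have hlen : (h⁻¹ * g).toWord.length < N :=
    Nat.lt_succ_of_le (Finset.le_sup (f := fun h => (h⁻¹ * g).toWord.length) hh)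
  rw [Set.mem_compl_iff, mem_startsWith_iff] at hw
  rw [smul_eq_mul, ← mul_assoc, ← mul_assoc, mem_startsWith_iff, mem_startsWith_iff]
  exact head?_toWord_mul_of_pow_mul hl hlen hw

theorem mem_compl_startsWith_or_of_mul_mem_compl {a b : α} (hab : a ≠ b) (v : FreeGroup α) :
    v ∈ (startsWith (b, false))ᶜ ∨ of a * v ∈ (startsWith (b, false))ᶜ := by
  refine or_iff_not_imp_left.2 fun hv => ?_
  have : v ∉ startsWith (a, !true) :=
    ((startsWith.disjoint_iff_ne.2 (by simpa using hab.symm)).notMem_of_mem_left (not_not.1 hv))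
  exact (startsWith.disjoint_iff_ne.2 (by simp)).notMem_of_mem_left
    (startsWith_mk_mul (w := (a, true)) v this)

theorem exists_univ_subset_smul_union_smul_translateCell {a b : α} (hab : a ≠ b)
    {s t : Finset (FreeGroup α)} (hC : (translateCell (startsWith (a, true)) s t).Nonempty) :
    ∃ h₁ h₂ : FreeGroup α, Set.univ ⊆ h₁ • translateCell (startsWith (a, true)) s t ∪
      h₂ • translateCell (startsWith (a, true)) s t := by
  obtain ⟨g, hg⟩ := hC
  obtain ⟨c, hc⟩ := exists_smul_compl_startsWith_subset_translateCell hab hg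
  exact ⟨_, _, univ_subset_smul_union_smul hc (mem_compl_startsWith_or_of_mul_mem_compl hab)⟩

theorem of_smul_startsWith_ssubset (a : α) :
    of a • startsWith (a, true) ⊂ startsWith (a, true) := by
  refine Set.ssubset_iff_subset_ne.2 ⟨?_, fun h => ?_⟩
  · rintro _ ⟨w, hw, rfl⟩
    refine startsWith_mk_mul w ?_
    exact (startsWith.disjoint_iff_ne.2 (by simp)).notMem_of_mem_left hw
  · have : of a ∈ of a • startsWith (a, true) := by rw [h, mem_startsWith_iff, toWord_of]; rfl
    simp [Set.mem_smul_set_iff_inv_smul_mem, mem_startsWith_iff] at this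

theorem strictAnti_pow_smul_startsWith (a : α) :
    StrictAnti fun n : ℕ => of a ^ n • startsWith (a, true) := by
  refine strictAnti_nat_of_succ_lt fun n => ?_
  rw [pow_succ, mul_smul]
  have h := of_smul_startsWith_ssubset a
  exact ⟨Set.smul_set_mono h.1, fun h' => h.2 (Set.smul_set_subset_smul_set_iff.1 h')⟩

end FreeGroup

theorem A15_eq_startsWith : A15 = FreeGroup.startsWith (0, true) := by
  ext g
  rw [FreeGroup.mem_startsWith_iff]
  rfl

open FreeGroup in
theorem stmt15 :
    (∀ s t : Finset (FreeGroup (Fin 2)),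
        ((⋂ a ∈ s, a • A15) ∩ ⋂ b ∈ t, b • A15ᶜ).Nonempty →
        ∃ h₁ h₂ : FreeGroup (Fin 2),
          (Set.univ : Set (FreeGroup (Fin 2))) ⊆
            h₁ • ((⋂ a ∈ s, a • A15) ∩ ⋂ b ∈ t, b • A15ᶜ) ∪
              h₂ • ((⋂ a ∈ s, a • A15) ∩ ⋂ b ∈ t, b • A15ᶜ)) ∧
      Set.Infinite (Set.range fun n : ℕ => (FreeGroup.of (0 : Fin 2)) ^ n • A15) := by
  rw [A15_eq_startsWith]
  exact ⟨fun _ _ => exists_univ_subset_smul_union_smul_translateCell (a := 0) (b := 1) (by decide),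
    Set.infinite_range_of_injective (strictAnti_pow_smul_startsWith 0).injective⟩
end

section
/- Let G be a topological group and A ⊆ G a set with the strong Baire property (its boundary is nowhere dense), and suppose a ∈ ϱ(A) := int(cl(A)) and b ∈ G \ ϱ(A). Then there exists g ∈ G such that a ∈ ϱ(gA) and b ∈ ϱ(G \ gA). -/
open Pointwise

/-- Put `x := g⁻¹ * b`: the conditions become `x ∈ V` and `x * (b⁻¹ * a) ∈ U`, and the second
one defines an open neighbourhood of `b`, which therefore meets `V`. -/
theorem exists_mem_smul_of_isOpen_of_mem_closure {G : Type*} [Group G] [TopologicalSpace G]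
    [ContinuousMul G] {U V : Set G} (hU : IsOpen U) {a b : G} (ha : a ∈ U) (hb : b ∈ closure V) :
    ∃ g : G, a ∈ g • U ∧ b ∈ g • V := by
  obtain ⟨x, hxU, hxV⟩ := mem_closure_iff.mp hb {x | x * (b⁻¹ * a) ∈ U}
    (hU.preimage (continuous_mul_const _)) (by simpa using ha)
  refine ⟨b * x⁻¹, ?_, ?_⟩ <;> rw [Set.mem_smul_set_iff_inv_smul_mem]
  · simpa [mul_assoc] using hxU
  · simpa using hxV

theorem stmt18_general {G : Type*} [Group G] [TopologicalSpace G] [IsTopologicalGroup G]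
    (A : Set G)
    (a b : G) (ha : a ∈ interior (closure A)) (hb : b ∉ interior (closure A)) :
    ∃ g : G, a ∈ interior (closure (g • A)) ∧ b ∈ interior (closure ((g • A)ᶜ)) := by
  have hb' : b ∈ closure (interior Aᶜ) := by rwa [interior_compl, closure_compl]
  obtain ⟨g, hga, hgb⟩ := exists_mem_smul_of_isOpen_of_mem_closure isOpen_interior ha hb'
  refine ⟨g, by rwa [closure_smul, interior_smul], interior_mono subset_closure ?_⟩
  rwa [← Set.smul_set_compl, interior_smul]

theorem stmt18 {G : Type*} [Group G] [TopologicalSpace G] [IsTopologicalGroup G]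
    (A : Set G) (hA : interior (frontier A) = ∅)
    (a b : G) (ha : a ∈ interior (closure A)) (hb : b ∉ interior (closure A)) :
    ∃ g : G, a ∈ interior (closure (g • A)) ∧ b ∈ interior (closure ((g • A)ᶜ)) :=
  stmt18_general A a b ha hb
end
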